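/- arXiv:1504.04253 — 5 statements merged into one kernel-verified Lean document; each statement's English description precedes it below -/
import Mathlib

section
/- Let H be a complex Hilbert space and J a symmetry on H (J = J* = J⁻¹). If U is a bounded operator on H with U*JU = J and U invertible (i.e., U is J-unitary) and ‖U − I‖ < 1, then there exists a bounded operator X with JX*J = −X (X is J-antihermitian) such that U = exp(X). -/
/-!
Write `U = 1 + a` and let `X = log (1 + a)` be the logarithm series. Then `exp X = U`, because
`t ↦ (1 + t a) exp (-log (1 + t a))` has derivative zero on `[0, 1]`.

The map `ψ T = J T* J` is a continuous real-linear anti-automorphism with `ψ U = U⁻¹`, so with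
`b = ψ a` we have `(1 + a)(1 + b) = 1`, `a b = b a` and `a + b + a b = 0`. The derivative of
`S t = log (1 + t a) + ψ (log (1 + t a))` is `a (1 + t a)⁻¹ + (1 + t b)⁻¹ b`, and since
`(1 + t a)(1 + t b) = 1 + (t² - t) a b` is invariant under `t ↦ 1 - t`, we get
`S' t + S' (1 - t) = 0`. Hence `S 1 - S 0 = S 0 - S 1`, so `S 1 = 0`, i.e. `ψ X = -X`.
-/

open NormedSpace Set

section LogOneAdd

variable {A : Type*} [NormedRing A] [NormedAlgebra ℝ A]

/-- The series of `log (1 + a)`; it is the junk value `0` where the series diverges. -/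
noncomputable def logOneAdd (a : A) : A :=
  ∑' n : ℕ, ((-1) ^ n / (n + 1) : ℝ) • a ^ (n + 1)

@[simp]
lemma logOneAdd_zero : logOneAdd (0 : A) = 0 := by
  simp [logOneAdd]

lemma Commute.logOneAdd_right {x a : A} (h : Commute x a) : Commute x (logOneAdd a) :=
  Commute.tsum_right x fun _ => (h.pow_right _).smul_right _

lemma commute_logOneAdd_smul (a : A) (s t : ℝ) :
    Commute (logOneAdd (s • a)) (logOneAdd (t • a)) :=
  (((Commute.refl a).smul_right s).logOneAdd_right.symm.smul_right t).logOneAdd_right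

lemma isUnit_one_add_of_norm_lt_one {R : Type*} [NormedRing R] [HasSummableGeomSeries R] {x : R}
    (hx : ‖x‖ < 1) : IsUnit (1 + x) := by
  simpa using isUnit_one_sub_of_norm_lt_one (x := -x) (by rwa [norm_neg])

lemma norm_smul_lt_one_of_mem_Icc {a : A} (ha : ‖a‖ < 1) {t : ℝ} (ht : t ∈ Icc (0 : ℝ) 1) :
    ‖t • a‖ < 1 := by
  rw [norm_smul, Real.norm_of_nonneg ht.1]
  exact lt_of_le_of_lt (mul_le_of_le_one_left (norm_nonneg a) ht.2) ha

lemma hasDerivAt_logOneAdd_smul [CompleteSpace A] (a : A) {t : ℝ} (ht : ‖t • a‖ < 1) :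
    HasDerivAt (fun s : ℝ => logOneAdd (s • a)) (a * Ring.inverse (1 + t • a)) t := by
  obtain ⟨R, htR, hR⟩ : ∃ R, |t| < R ∧ R * ‖a‖ < 1 := by
    rw [norm_smul, Real.norm_eq_abs] at ht
    exact ((continuous_id.mul continuous_const).continuousAt.eventually_lt
      continuousAt_const ht).exists_gt
  have hR0 : 0 < R := (abs_nonneg t).trans_lt htR
  set g : ℕ → ℝ → A := fun n s => ((-1) ^ n / (n + 1) * s ^ (n + 1) : ℝ) • a ^ (n + 1)
  set g' : ℕ → ℝ → A := fun n s => ((-1) ^ n * s ^ n : ℝ) • a ^ (n + 1)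
  have hg : ∀ n s, HasDerivAt (g n) (g' n s) s := by
    intro n s
    refine HasDerivAt.smul_const ?_ _
    convert ((hasDerivAt_pow (n + 1) s).const_mul ((-1) ^ n / (n + 1) : ℝ)) using 1
    field_simp
    push_cast
    ring
  have hg' : ∀ n, ∀ s ∈ Ioo (-R) R, ‖g' n s‖ ≤ ‖a‖ * (R * ‖a‖) ^ n := by
    intro n s hs
    calc ‖g' n s‖ ≤ R ^ n * ‖a‖ ^ (n + 1) := by
          rw [norm_smul, norm_mul, norm_pow, norm_pow, norm_neg, norm_one, one_pow, one_mul]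
          exact mul_le_mul (pow_le_pow_left₀ (norm_nonneg s) (abs_lt.mpr hs).le n)
            (norm_pow_le' a n.succ_pos) (norm_nonneg _) (pow_nonneg hR0.le n)
      _ = ‖a‖ * (R * ‖a‖) ^ n := by ring
  have hsum : ∑' n, g' n t = a * Ring.inverse (1 + t • a) := by
    have hterm : ∀ n, g' n t = a * (-(t • a)) ^ n := by
      intro n
      rw [← neg_smul, smul_pow, mul_smul_comm, ← pow_succ', neg_pow]
    have hta : ‖-(t • a)‖ < 1 := by rwa [norm_neg]
    rw [tsum_congr hterm, (summable_geometric_of_norm_lt_one hta).tsum_mul_left,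
      geom_series_eq_inverse _ hta, sub_neg_eq_add]
  have hℓ : (fun s : ℝ => logOneAdd (s • a)) = fun s => ∑' n, g n s := by
    ext s
    simp only [logOneAdd, g, smul_pow, smul_smul, mul_comm]
  rw [hℓ, ← hsum]
  exact hasDerivAt_tsum_of_isPreconnected
    ((summable_geometric_of_lt_one (by positivity) hR).mul_left ‖a‖) isOpen_Ioo
    isPreconnected_Ioo (fun n s _ => hg n s) hg' (y₀ := 0) ⟨by linarith, hR0⟩ (by simp [g])
    (abs_lt.mp htR)

lemma hasDerivAt_exp_of_commute [CompleteSpace A] {f : ℝ → A} {f' : A} {s : ℝ}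
    (hf : HasDerivAt f f' s) (hcomm : ∀ t, Commute (f t) (f s)) :
    HasDerivAt (fun t => exp (f t)) (f' * exp (f s)) s := by
  let _ := NormedAlgebra.restrictScalars ℚ ℝ A
  have hsplit : (fun t => exp (f t)) = fun t => exp (f t - f s) * exp (f s) := by
    ext t
    rw [← exp_add_of_commute ((hcomm t).sub_left (Commute.refl _)), sub_add_cancel]
  have hexp : HasFDerivAt exp (1 : A →L[ℝ] A) (f s - f s) := by
    rw [sub_self]
    exact hasFDerivAt_exp_zero
  rw [hsplit]
  simpa using (hexp.comp_hasDerivAt s (hf.sub_const (f s))).mul_const (exp (f s))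

lemma apply_one_eq_apply_zero_of_hasDerivAt_zero {E : Type*} [NormedAddCommGroup E]
    [NormedSpace ℝ E] {f : ℝ → E} (hf : ∀ t ∈ Icc (0 : ℝ) 1, HasDerivAt f 0 t) : f 1 = f 0 :=
  constant_of_has_deriv_right_zero (fun t ht => (hf t ht).continuousAt.continuousWithinAt)
    (fun t ht => (hf t (Ico_subset_Icc_self ht)).hasDerivWithinAt) 1 ⟨zero_le_one, le_rfl⟩

theorem exp_logOneAdd [CompleteSpace A] {a : A} (ha : ‖a‖ < 1) : exp (logOneAdd a) = 1 + a := by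
  let _ := NormedAlgebra.restrictScalars ℚ ℝ A
  have hderiv : ∀ t ∈ Icc (0 : ℝ) 1,
      HasDerivAt (fun t : ℝ => (1 + t • a) * exp (-logOneAdd (t • a))) 0 t := by
    intro t ht
    have hta := norm_smul_lt_one_of_mem_Icc ha ht
    have hexp : HasDerivAt (fun s : ℝ => exp (-logOneAdd (s • a)))
        (-(a * Ring.inverse (1 + t • a)) * exp (-logOneAdd (t • a))) t :=
      hasDerivAt_exp_of_commute (hasDerivAt_logOneAdd_smul a hta).neg
        fun s => (commute_logOneAdd_smul a s t).neg_left.neg_right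
    have hlin : HasDerivAt (fun t : ℝ => 1 + t • a) a t := by
      simpa using ((hasDerivAt_id t).smul_const a).const_add (1 : A)
    refine (hlin.mul hexp).congr_deriv ?_
    have hcomm : Commute (1 + t • a) a :=
      (Commute.one_left a).add_left ((Commute.refl a).smul_left t)
    rw [neg_mul, mul_neg, ← mul_assoc, ← mul_assoc, hcomm.eq, mul_assoc a,
      Ring.mul_inverse_cancel _ (isUnit_one_add_of_norm_lt_one hta), mul_one, add_neg_cancel]
  have h := apply_one_eq_apply_zero_of_hasDerivAt_zero hderiv
  simp only [one_smul, zero_smul, add_zero, logOneAdd_zero, neg_zero, exp_zero, mul_one] at h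
  calc exp (logOneAdd a) = (1 + a) * exp (-logOneAdd a) * exp (logOneAdd a) := by rw [h, one_mul]
    _ = 1 + a := by
      rw [mul_assoc, ← exp_add_of_commute (Commute.refl _).neg_left, neg_add_cancel, exp_zero,
        mul_one]

/-- `x, y` stand for the derivatives at `t` of `log (1 + s a)` and of its image under an
anti-automorphism mapping `a` to `b`; `x', y'` for those at `1 - t`. -/
lemma add_add_eq_zero_of_mul_one_add_smul {a b : A} (hab : Commute a b)
    (hsum : a + b + a * b = 0) {t : ℝ} {x y x' y' : A} (hx : x * (1 + t • a) = a)
    (hy : y * (1 + t • b) = b) (hx' : x' * (1 + (1 - t) • a) = a)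
    (hy' : y' * (1 + (1 - t) • b) = b) (hunit : IsUnit ((1 + t • a) * (1 + t • b))) :
    x + y + (x' + y') = 0 := by
  have hP : ∀ s : ℝ, (1 + s • a) * (1 + s • b) = 1 + (s * s - s) • (a * b) := by
    intro s
    have : a + b = -(a * b) := eq_neg_of_add_eq_zero_left hsum
    simp only [add_mul, mul_add, one_mul, mul_one, smul_mul_smul_comm, sub_smul]
    rw [add_assoc, ← add_assoc (s • a), ← smul_add, this]
    module
  have hcomm : ∀ s : ℝ, Commute (1 + s • a) (1 + s • b) := fun s =>
    (Commute.one_left _).add_left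
      ((Commute.one_right _).add_right ((hab.smul_left s).smul_right s))
  have key : ∀ (s : ℝ) (x y : A), x * (1 + s • a) = a → y * (1 + s • b) = b →
      (x + y) * ((1 + s • a) * (1 + s • b)) = a + b + (2 * s) • (a * b) := by
    intro s x y hx hy
    rw [add_mul, ← mul_assoc, hx, (hcomm s).eq, ← mul_assoc, hy]
    simp only [mul_add, mul_one, mul_smul_comm, hab.eq]
    module
  have hsymm : (1 + t • a) * (1 + t • b) = (1 + (1 - t) • a) * (1 + (1 - t) • b) := by
    rw [hP, hP]; congr 2; ring
  rw [← hunit.mul_left_eq_zero, add_mul, key t x y hx hy, hsymm, key (1 - t) x' y' hx' hy']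
  calc _ = (2 : ℝ) • (a + b + a * b) := by module
    _ = 0 := by rw [hsum, smul_zero]

theorem map_logOneAdd_eq_neg [CompleteSpace A] {ψ : A →L[ℝ] A} (hψ1 : ψ 1 = 1)
    (hψmul : ∀ x y, ψ (x * y) = ψ y * ψ x) {a : A} (ha : ‖a‖ < 1)
    (hab : (1 + a) * (1 + ψ a) = 1) (hba : (1 + ψ a) * (1 + a) = 1) :
    ψ (logOneAdd a) = -logOneAdd a := by
  set b := ψ a
  have hsum : a + b + a * b = 0 :=
    add_eq_left.mp ((by noncomm_ring : (1 + a) * (1 + b) = 1 + (a + b + a * b)).symm.trans hab)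
  have hcomm : Commute a b := add_left_cancel <| hsum.trans <| .symm <|
    add_eq_left.mp ((by noncomm_ring : (1 + b) * (1 + a) = 1 + (a + b + b * a)).symm.trans hba)
  have hψp : ∀ s : ℝ, ψ (1 + s • a) = 1 + s • b := fun s => by rw [map_add, map_smul, hψ1]
  set D : ℝ → A := fun s => a * Ring.inverse (1 + s • a)
  have hD : ∀ s ∈ Icc (0 : ℝ) 1, D s * (1 + s • a) = a ∧ ψ (D s) * (1 + s • b) = b ∧
      IsUnit ((1 + s • a) * (1 + s • b)) := by
    intro s hs
    have hp := isUnit_one_add_of_norm_lt_one (norm_smul_lt_one_of_mem_Icc ha hs)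
    have hψinv : ψ (Ring.inverse (1 + s • a)) * (1 + s • b) = 1 := by
      rw [← hψp, ← hψmul, Ring.mul_inverse_cancel _ hp, hψ1]
    have hq : IsUnit (1 + s • b) := ⟨⟨1 + s • b, ψ (Ring.inverse (1 + s • a)),
      by rw [← hψp, ← hψmul, Ring.inverse_mul_cancel _ hp, hψ1], hψinv⟩, rfl⟩
    have hbq : Commute b (1 + s • b) :=
      (Commute.one_right b).add_right ((Commute.refl b).smul_right s)
    refine ⟨by rw [mul_assoc, Ring.inverse_mul_cancel _ hp, mul_one], ?_, hp.mul hq⟩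
    rw [hψmul, mul_assoc, hbq.eq, ← mul_assoc, hψinv, one_mul]
  set S : ℝ → A := fun s => logOneAdd (s • a) + ψ (logOneAdd (s • a))
  have hS : ∀ s ∈ Icc (0 : ℝ) 1, HasDerivAt S (D s + ψ (D s)) s := fun s hs =>
    have h := hasDerivAt_logOneAdd_smul a (norm_smul_lt_one_of_mem_Icc ha hs)
    h.add (ψ.hasFDerivAt.comp_hasDerivAt s h)
  have hT : ∀ s ∈ Icc (0 : ℝ) 1, HasDerivAt (fun s => S s - S (1 - s)) 0 s := by
    intro s hs
    have hs' : 1 - s ∈ Icc (0 : ℝ) 1 := ⟨by linarith [hs.2], by linarith [hs.1]⟩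
    obtain ⟨hx, hy, hunit⟩ := hD s hs
    obtain ⟨hx', hy', -⟩ := hD (1 - s) hs'
    have hS' := (hS (1 - s) hs').scomp s ((hasDerivAt_id s).const_sub 1)
    refine ((hS s hs).sub hS').congr_deriv ?_
    rw [neg_one_smul, sub_neg_eq_add,
      add_add_eq_zero_of_mul_one_add_smul hcomm hsum hx hy hx' hy' hunit]
  have h := apply_one_eq_apply_zero_of_hasDerivAt_zero hT
  simp only [S, sub_self, sub_zero, one_smul, zero_smul, logOneAdd_zero, map_zero, add_zero] at h
  rw [zero_sub, eq_neg_iff_add_eq_zero, ← two_smul ℝ, smul_eq_zero] at h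
  exact eq_neg_of_add_eq_zero_right (h.resolve_left two_ne_zero)

end LogOneAdd

open ContinuousLinearMap

variable {H : Type*} [NormedAddCommGroup H] [InnerProductSpace ℂ H] [CompleteSpace H]

/-- The `J`-adjoint `T^# = J T* J`. -/
noncomputable def sharp (J T : H →L[ℂ] H) : H →L[ℂ] H :=
  J ∘L (ContinuousLinearMap.adjoint T) ∘L J

noncomputable def sharpL (J : H →L[ℂ] H) : (H →L[ℂ] H) →L[ℝ] (H →L[ℂ] H) :=
  mul ℝ _ J ∘L (mul ℝ _).flip J ∘L (starL' ℝ : (H →L[ℂ] H) ≃L[ℝ] _).toContinuousLinearMap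

lemma sharpL_apply (J T : H →L[ℂ] H) : sharpL J T = sharp J T := rfl

lemma sharp_eq_mul (J T : H →L[ℂ] H) : sharp J T = J * (star T * J) := rfl

lemma sharp_one {J : H →L[ℂ] H} (hJ2 : J * J = 1) : sharp J 1 = 1 := by
  rw [sharp_eq_mul, star_one, one_mul, hJ2]

lemma sharp_mul {J : H →L[ℂ] H} (hJ2 : J * J = 1) (S T : H →L[ℂ] H) :
    sharp J (S * T) = sharp J T * sharp J S := by
  calc J * (star (S * T) * J) = J * (star T * ((J * J) * (star S * J))) := by
        rw [star_mul, hJ2, one_mul, mul_assoc]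
    _ = J * (star T * J) * (J * (star S * J)) := by simp only [mul_assoc]

lemma sharp_eq_of_mul_eq_one {J U V : H →L[ℂ] H} (hJ2 : J * J = 1)
    (hUJ : star U * (J * U) = J) (hUV : U * V = 1) : sharp J U = V :=
  calc sharp J U = J * (star U * J) * (U * V) := by rw [hUV, mul_one, sharp_eq_mul]
    _ = J * (star U * (J * U)) * V := by simp only [mul_assoc]
    _ = V := by rw [hUJ, hJ2, one_mul]

theorem stmt0_general (J U : H →L[ℂ] H)
    (hJ2 : J ∘L J = 1)
    (hUJ : (ContinuousLinearMap.adjoint U) ∘L J ∘L U = J)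
    (hUinv : ∃ V : H →L[ℂ] H, U ∘L V = 1 ∧ V ∘L U = 1)
    (hU : ‖U - 1‖ < 1) :
    ∃ X : H →L[ℂ] H, sharp J X = -X ∧ NormedSpace.exp X = U := by
  obtain ⟨V, hUV, hVU⟩ := hUinv
  have hb : 1 + sharpL J (U - 1) = V := by
    rw [map_sub, sharpL_apply, sharpL_apply, sharp_one hJ2, sharp_eq_of_mul_eq_one hJ2 hUJ hUV,
      add_sub_cancel]
  refine ⟨logOneAdd (U - 1), ?_, by rw [exp_logOneAdd hU, add_sub_cancel]⟩
  refine map_logOneAdd_eq_neg (ψ := sharpL J) (sharp_one hJ2) (sharp_mul hJ2) hU ?_ ?_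
  · rw [hb, add_sub_cancel]
    exact hUV
  · rw [hb, add_sub_cancel]
    exact hVU

/-- If `U` is a bounded `J`-unitary operator with `‖U − I‖ < 1`, then `U = exp X` for some
`J`-antihermitian `X`. -/
theorem stmt0 (J U : H →L[ℂ] H)
    (hJsa : ContinuousLinearMap.adjoint J = J) (hJ2 : J ∘L J = 1)
    (hUJ : (ContinuousLinearMap.adjoint U) ∘L J ∘L U = J)
    (hUinv : ∃ V : H →L[ℂ] H, U ∘L V = 1 ∧ V ∘L U = 1)
    (hU : ‖U - 1‖ < 1) :
    ∃ X : H →L[ℂ] H, sharp J X = -X ∧ NormedSpace.exp X = U :=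
  stmt0_general J U hJ2 hUJ hUinv hU
end

section
/- Let (S, T) be a neutral dual pair in a Krein space (H, J), i.e., S and T are closed J-neutral subspaces with H = S ∔ T^{[⊥]} (direct sum). Then for any orthonormal basis {sₙ} of S (in the Hilbert space sense) there exists a Riesz basis {tₙ} of T such that [sᵢ, tⱼ] = δᵢⱼ for all i, j, where [f,g] = ⟨Jf, g⟩. -/
/-!
Put `M = J T`, so that `T^{[⊥]} = Mᗮ` and `H = S ∔ Mᗮ`. The orthogonal projection onto `S` then
restricts to an isomorphism `M ≃ S`: an element of `M ∩ Sᗮ` is orthogonal to `S + Mᗮ = H`, and a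
preimage of `u ∈ S` is `P* u`, where `P` is the bounded projection onto `S` along `Mᗮ`.
Precomposing with the unitary `J` gives `B : T ≃ S` with `⟪s, J t⟫ = ⟪s, B t⟫` for `s ∈ S`, so
`tⱼ = B⁻¹ sⱼ` is `J`-biorthogonal to `(sᵢ)`. It is a Riesz basis since, by polar decomposition,
the isomorphism `B⁻¹ : S ≃ T` is a unitary `W` followed by an automorphism of `T`, and `W`
carries `(sᵢ)` to an orthonormal basis of `T`.
-/

open ContinuousLinearMap

variable {H : Type*} [NormedAddCommGroup H] [InnerProductSpace ℂ H] [CompleteSpace H]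

/-- The `J`-orthogonal companion `S^{[⊥]} = {f : [g,f] = 0 ∀ g ∈ S}` where `[g,f] = ⟪J g, f⟫`. -/
def jperp (J : H →L[ℂ] H) (S : Submodule ℂ H) : Submodule ℂ H where
  carrier := {f | ∀ g ∈ S, (inner ℂ (J g) f : ℂ) = 0}
  add_mem' := by
    intro a b ha hb g hg
    rw [inner_add_right, ha g hg, hb g hg, add_zero]
  zero_mem' := by
    intro g hg
    simp
  smul_mem' := by
    intro c a ha g hg
    rw [inner_smul_right, ha g hg, mul_zero]

/-- `t` is a Riesz basis of `T`: the image of an orthonormal (Hilbert) basis of `T` under a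
bounded invertible operator. -/
def IsRieszBasis {ι : Type*} (T : Submodule ℂ H) (t : ι → T) : Prop :=
  ∃ (e : HilbertBasis ι ℂ T) (V : T ≃L[ℂ] T), ∀ i, t i = V (e i)

open scoped InnerProductSpace

namespace Submodule

variable {𝕜 E : Type*} [RCLike 𝕜] [NormedAddCommGroup E] [InnerProductSpace 𝕜 E]
  {S M : Submodule 𝕜 E}

theorem injective_orthogonalProjectionOnto_comp_subtypeL [S.HasOrthogonalProjection]
    (h : Codisjoint S Mᗮ) : Function.Injective (S.orthogonalProjectionOnto ∘L M.subtypeL) := by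
  refine (injective_iff_map_eq_zero _).2 fun m hm => ?_
  have hmS : (m : E) ∈ Sᗮ := orthogonalProjectionOnto_eq_zero_iff.1 hm
  have hm' : (m : E) ∈ Sᗮ ⊓ Mᗮᗮ := ⟨hmS, le_orthogonal_orthogonal M m.2⟩
  rwa [inf_orthogonal, h.eq_top, top_orthogonal_eq_bot, mem_bot, ZeroMemClass.coe_eq_zero] at hm'

theorem surjective_orthogonalProjectionOnto_comp_subtypeL [CompleteSpace E] [CompleteSpace S]
    [CompleteSpace M] (h : IsCompl S Mᗮ) :
    Function.Surjective (S.orthogonalProjectionOnto ∘L M.subtypeL) := by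
  intro u
  let P : E →L[𝕜] S := S.projectionOntoL Mᗮ <| IsCompl.isTopCompl_of_isClosed h
    (completeSpace_coe_iff_isComplete.1 ‹_›).isClosed M.isClosed_orthogonal
  have hPS (v : S) : P v = v := projectionOntoL_apply_left _ v
  have hPM (b : Mᗮ) : P b = 0 := projectionOntoL_apply_right _ b
  have hy : adjoint P u ∈ M := by
    rw [← M.orthogonal_orthogonal, mem_orthogonal]
    intro b hb
    rw [adjoint_inner_right, hPM ⟨b, hb⟩, inner_zero_left]
  refine ⟨⟨adjoint P u, hy⟩, ext_inner_left 𝕜 fun v => ?_⟩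
  simp only [comp_apply, subtypeL_apply, inner_orthogonalProjectionOnto_eq_of_mem_left,
    adjoint_inner_right, hPS]

noncomputable def orthogonalProjectionEquivOfIsCompl [CompleteSpace E] [CompleteSpace S]
    [CompleteSpace M] (h : IsCompl S Mᗮ) : M ≃L[𝕜] S :=
  .ofBijective (S.orthogonalProjectionOnto ∘L M.subtypeL)
    (LinearMap.ker_eq_bot.2 (injective_orthogonalProjectionOnto_comp_subtypeL h.codisjoint))
    (LinearMap.range_eq_top.2 (surjective_orthogonalProjectionOnto_comp_subtypeL h))

end Submodule

section PolarDecomposition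

variable {E F : Type*} [NormedAddCommGroup E] [InnerProductSpace ℂ E] [CompleteSpace E]
  [NormedAddCommGroup F] [InnerProductSpace ℂ F] [CompleteSpace F]

theorem ContinuousLinearEquiv.isStrictlyPositive_adjoint_comp_self (U : E ≃L[ℂ] F) :
    IsStrictlyPositive (adjoint (U : E →L[ℂ] F) ∘L (U : E →L[ℂ] F)) := by
  refine IsStrictlyPositive.iff_of_unital.2
    ⟨(nonneg_iff_isPositive _).2 (isPositive_adjoint_comp_self _), isUnit_iff_exists.2
      ⟨U.symm ∘L adjoint (U.symm : F →L[ℂ] E), ?_, ?_⟩⟩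
  · rw [mul_def, comp_assoc, ← comp_assoc (U : E →L[ℂ] F), U.coe_comp_coe_symm, id_comp,
      ← adjoint_comp, U.coe_symm_comp_coe, adjoint_id, one_def]
  · rw [mul_def, comp_assoc, ← comp_assoc (adjoint _), ← adjoint_comp, U.coe_comp_coe_symm,
      adjoint_id, id_comp, U.coe_symm_comp_coe, one_def]

theorem ContinuousLinearEquiv.nonempty_linearIsometryEquiv (U : E ≃L[ℂ] F) :
    Nonempty (E ≃ₗᵢ[ℂ] F) := by
  set A : E →L[ℂ] F := (U : E →L[ℂ] F)
  have hA : IsStrictlyPositive (adjoint A ∘L A) := U.isStrictlyPositive_adjoint_comp_self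
  set R : E →L[ℂ] E := CFC.sqrt (adjoint A ∘L A)
  have hRR : adjoint R ∘L R = adjoint A ∘L A := by
    rw [(CFC.sqrt_nonneg _).isSelfAdjoint.adjoint_eq, ← mul_def,
      CFC.sqrt_mul_sqrt_self _ hA.nonneg]
  have hnorm (x : E) : ‖A x‖ = ‖R x‖ := by
    rw [apply_norm_eq_sqrt_inner_adjoint_left, apply_norm_eq_sqrt_inner_adjoint_left, hRR]
  let R' : E ≃L[ℂ] E := ContinuousLinearEquiv.unitsEquiv ℂ E hA.isUnit_cfcSqrt.unit
  -- `U ∘ R⁻¹` with `R = √(U†U)` is the unitary part of the polar decomposition of `U`.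
  refine ⟨{ toLinearEquiv := (R'.symm.trans U).toLinearEquiv, norm_map' := fun x => ?_ }⟩
  exact (hnorm _).trans (congrArg norm (R'.apply_symm_apply x))

end PolarDecomposition

omit [CompleteSpace H] in
theorem jperp_eq_orthogonal_map (J : H →L[ℂ] H) (T : Submodule ℂ H) :
    jperp J T = (T.map (J : H →ₗ[ℂ] H))ᗮ := by
  ext f
  simp [jperp, Submodule.mem_orthogonal]

omit [CompleteSpace H] in
theorem isRieszBasis_of_continuousLinearEquiv {ι E : Type*} [NormedAddCommGroup E]
    [InnerProductSpace ℂ E] [CompleteSpace E] {T : Submodule ℂ H} [CompleteSpace T]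
    (U : E ≃L[ℂ] T) (s : HilbertBasis ι ℂ E) : IsRieszBasis T (fun i => U (s i)) := by
  obtain ⟨W⟩ := U.nonempty_linearIsometryEquiv
  refine ⟨.ofRepr (W.symm.trans s.repr), W.symm.toContinuousLinearEquiv.trans U, fun i => ?_⟩
  show U (s i) = U (W.symm (W (s i)))
  rw [W.symm_apply_apply]

theorem stmt5_general {ι : Type*} [DecidableEq ι] (J : H →L[ℂ] H)
    (hJsa : ContinuousLinearMap.adjoint J = J) (hJ2 : J ∘L J = 1)
    (S T : Submodule ℂ H) [CompleteSpace S] [CompleteSpace T]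
    (hsum : ∀ x : H, ∃ a ∈ S, ∃ b ∈ jperp J T, x = a + b)
    (hdis : S ⊓ jperp J T = ⊥)
    (s : HilbertBasis ι ℂ S) :
    ∃ t : ι → T, IsRieszBasis T t ∧
      ∀ i j, (inner ℂ (J ((s i : S) : H)) ((t j : H)) : ℂ) = if i = j then 1 else 0 := by
  have hJ : J ∈ unitary (H →L[ℂ] H) := by
    rw [Unitary.mem_iff, star_eq_adjoint, hJsa, mul_def, hJ2, and_self]
  let Ju : H ≃ₗᵢ[ℂ] H := Unitary.linearIsometryEquiv ⟨J, hJ⟩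
  have hST : IsCompl S (T.map (J : H →ₗ[ℂ] H))ᗮ := by
    rw [← jperp_eq_orthogonal_map]
    refine ⟨disjoint_iff.2 hdis, codisjoint_iff.2 (eq_top_iff.2 fun x _ => ?_)⟩
    obtain ⟨a, ha, b, hb, rfl⟩ := hsum x
    exact Submodule.add_mem_sup ha hb
  let B : T ≃L[ℂ] S :=
    (Ju.toContinuousLinearEquiv.submoduleMap T).trans
      (Submodule.orthogonalProjectionEquivOfIsCompl hST)
  refine ⟨fun j => B.symm (s j), isRieszBasis_of_continuousLinearEquiv B.symm s, fun i j => ?_⟩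
  have hJsymm : (J : H →ₗ[ℂ] H).IsSymmetric := (isSelfAdjoint_iff'.2 hJsa).isSymmetric
  calc ⟪J (s i), (B.symm (s j) : H)⟫_ℂ = ⟪(s i : H), J (B.symm (s j))⟫_ℂ := hJsymm _ _
    _ = ⟪s i, B (B.symm (s j))⟫_ℂ :=
      (Submodule.inner_orthogonalProjectionOnto_eq_of_mem_left _ _).symm
    _ = if i = j then 1 else 0 := by rw [B.apply_symm_apply, orthonormal_iff_ite.1 s.orthonormal]

/-- Given a neutral dual pair `(S,T)` and an orthonormal basis `{sₙ}` of `S`, there is a Riesz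
basis `{tₙ}` of `T` that is `J`-biorthogonal to it. -/
theorem stmt5 {ι : Type*} [DecidableEq ι] (J : H →L[ℂ] H)
    (hJsa : ContinuousLinearMap.adjoint J = J) (hJ2 : J ∘L J = 1)
    (S T : Submodule ℂ H) [CompleteSpace S] [CompleteSpace T]
    (hSc : IsClosed (S : Set H)) (hTc : IsClosed (T : Set H))
    (hSneu : ∀ f ∈ S, (inner ℂ (J f) f : ℂ) = 0)
    (hTneu : ∀ f ∈ T, (inner ℂ (J f) f : ℂ) = 0)
    (hsum : ∀ x : H, ∃ a ∈ S, ∃ b ∈ jperp J T, x = a + b)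
    (hdis : S ⊓ jperp J T = ⊥)
    (s : HilbertBasis ι ℂ S) :
    ∃ t : ι → T, IsRieszBasis T t ∧
      ∀ i j, (inner ℂ (J ((s i : S) : H)) ((t j : H)) : ℂ) = if i = j then 1 else 0 :=
  stmt5_general J hJsa hJ2 S T hsum hdis s
end

section
/- Let E₁, E₂ ∈ L(H) be (not necessarily orthogonal) projections on a Hilbert space H, and let P_{R(E₁)}, P_{R(E₂)} be the orthogonal projections onto their ranges. Then ‖P_{R(E₁)} − P_{R(E₂)}‖ ≤ ‖E₁ − E₂‖. -/
/-!
With `D = E₁ - E₂`, the relations `Eᵢ Pᵢ = Pᵢ` and `Pᵢ Eᵢ = Eᵢ` give the identity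
`P₁ - P₂ = P₁ D* (1 - P₂) + (1 - P₁) D P₂`. The two summands act on the orthogonal pieces
`(1 - P₂) x` and `P₂ x` and land in the orthogonal subspaces `R(P₁)` and `R(P₁)ᗮ`, so by Pythagoras
`‖(P₁ - P₂) x‖² ≤ ‖D‖² (‖(1 - P₂) x‖² + ‖P₂ x‖²) = ‖D‖² ‖x‖²`, using `‖D*‖ = ‖D‖`.
-/

open ContinuousLinearMap

variable {H : Type*} [NormedAddCommGroup H] [InnerProductSpace ℂ H] [CompleteSpace H]

theorem sub_eq_mul_star_sub_mul_one_sub_add {R : Type*} [Ring R] [StarRing R] {p₁ p₂ e₁ e₂ : R}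
    (hp₁ : IsSelfAdjoint p₁) (hp₂ : IsSelfAdjoint p₂)
    (he₁p₁ : e₁ * p₁ = p₁) (hp₁e₁ : p₁ * e₁ = e₁) (he₂p₂ : e₂ * p₂ = p₂) (hp₂e₂ : p₂ * e₂ = e₂) :
    p₁ - p₂ = p₁ * star (e₁ - e₂) * (1 - p₂) + (1 - p₁) * (e₁ - e₂) * p₂ := by
  have hp₁e₁' : p₁ * star e₁ = p₁ := by simpa [hp₁.star_eq] using congrArg star he₁p₁
  have he₂p₂' : star e₂ * p₂ = star e₂ := by simpa [hp₂.star_eq] using congrArg star hp₂e₂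
  have h₁ : p₁ * star (e₁ - e₂) * (1 - p₂) = p₁ * (1 - p₂) :=
    calc _ = p₁ * star e₁ * (1 - p₂) - p₁ * (star e₂ - star e₂ * p₂) := by
          rw [star_sub]; noncomm_ring
      _ = p₁ * (1 - p₂) := by rw [hp₁e₁', he₂p₂', sub_self, mul_zero, sub_zero]
  have h₂ : (1 - p₁) * (e₁ - e₂) * p₂ = -((1 - p₁) * p₂) :=
    calc _ = (e₁ - p₁ * e₁) * p₂ - (1 - p₁) * (e₂ * p₂) := by noncomm_ring
      _ = -((1 - p₁) * p₂) := by rw [hp₁e₁, sub_self, zero_mul, he₂p₂, zero_sub]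
  rw [h₁, h₂]
  noncomm_ring

theorem IsIdempotentElem.mul_eq_right_of_range_le {R M : Type*} [Semiring R]
    [TopologicalSpace M] [AddCommMonoid M] [Module R M] {p q : M →L[R] M}
    (hp : IsIdempotentElem p) (h : q.range ≤ p.range) : p * q = q :=
  coe_injective ((LinearMap.IsIdempotentElem.comp_eq_right_iff hp.toLinearMap _).2 h)

namespace IsStarProjection

variable {𝕜 E : Type*} [RCLike 𝕜] [NormedAddCommGroup E] [InnerProductSpace 𝕜 E] [CompleteSpace E]
  {P : E →L[𝕜] E}

theorem inner_apply_one_sub_apply (hP : IsStarProjection P) (x y : E) :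
    inner 𝕜 (P x) ((1 - P) y) = 0 := by
  rw [← adjoint_inner_right, hP.isSelfAdjoint.adjoint_eq, ← mul_apply_eq_comp,
    hP.mul_one_sub_self, zero_apply, inner_zero_right]

theorem norm_apply_sq_add_norm_one_sub_apply_sq (hP : IsStarProjection P) (x : E) :
    ‖P x‖ ^ 2 + ‖(1 - P) x‖ ^ 2 = ‖x‖ ^ 2 := by
  have hx : P x + (1 - P) x = x := by rw [sub_apply, one_apply_eq_self, add_sub_cancel]
  rw [sq, sq, sq, ← norm_add_sq_eq_norm_sq_add_norm_sq_of_inner_eq_zero _ _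
    (hP.inner_apply_one_sub_apply x x), hx]

theorem norm_apply_le (hP : IsStarProjection P) (x : E) : ‖P x‖ ≤ ‖x‖ :=
  pow_le_pow_iff_left₀ (norm_nonneg _) (norm_nonneg _) two_ne_zero |>.1 <|
    (hP.norm_apply_sq_add_norm_one_sub_apply_sq x) ▸ le_add_of_nonneg_right (sq_nonneg _)

theorem norm_mul_mul_one_sub_add_le (hP : IsStarProjection P) {Q : E →L[𝕜] E}
    (hQ : IsStarProjection Q) (A B : E →L[𝕜] E) :
    ‖P * A * (1 - Q) + (1 - P) * B * Q‖ ≤ max ‖A‖ ‖B‖ := by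
  set C := max ‖A‖ ‖B‖
  have hC : 0 ≤ C := (norm_nonneg A).trans (le_max_left _ _)
  refine opNorm_le_bound _ hC fun x => ?_
  have hu : ‖P (A ((1 - Q) x))‖ ≤ C * ‖(1 - Q) x‖ :=
    (hP.norm_apply_le _).trans <| (le_opNorm A _).trans <|
      mul_le_mul_of_nonneg_right (le_max_left _ _) (norm_nonneg _)
  have hv : ‖(1 - P) (B (Q x))‖ ≤ C * ‖Q x‖ :=
    (hP.one_sub.norm_apply_le _).trans <| (le_opNorm B _).trans <|
      mul_le_mul_of_nonneg_right (le_max_right _ _) (norm_nonneg _)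
  have hsplit : ‖(P * A * (1 - Q) + (1 - P) * B * Q) x‖ ^ 2
      = ‖P (A ((1 - Q) x))‖ ^ 2 + ‖(1 - P) (B (Q x))‖ ^ 2 := by
    simp only [sq, add_apply]
    exact norm_add_sq_eq_norm_sq_add_norm_sq_of_inner_eq_zero _ _
      (hP.inner_apply_one_sub_apply _ _)
  refine pow_le_pow_iff_left₀ (norm_nonneg _) (by positivity) two_ne_zero |>.1 ?_
  calc _ = ‖P (A ((1 - Q) x))‖ ^ 2 + ‖(1 - P) (B (Q x))‖ ^ 2 := hsplit
    _ ≤ (C * ‖(1 - Q) x‖) ^ 2 + (C * ‖Q x‖) ^ 2 := by gcongr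
    _ = (C * ‖x‖) ^ 2 := by
      rw [mul_pow, mul_pow, mul_pow, ← hQ.norm_apply_sq_add_norm_one_sub_apply_sq x]
      ring

end IsStarProjection

/-- If `E₁, E₂` are (not necessarily orthogonal) bounded projections and `P₁, P₂` the orthogonal
projections onto their ranges, then `‖P₁ − P₂‖ ≤ ‖E₁ − E₂‖`. -/
theorem stmt8 (E₁ E₂ P₁ P₂ : H →L[ℂ] H)
    (hE₁ : E₁ ∘L E₁ = E₁) (hE₂ : E₂ ∘L E₂ = E₂)
    (hP₁ : P₁ ∘L P₁ = P₁) (hP₁sa : IsSelfAdjoint P₁)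
    (hP₂ : P₂ ∘L P₂ = P₂) (hP₂sa : IsSelfAdjoint P₂)
    (hr₁ : LinearMap.range (P₁ : H →ₗ[ℂ] H) = LinearMap.range (E₁ : H →ₗ[ℂ] H))
    (hr₂ : LinearMap.range (P₂ : H →ₗ[ℂ] H) = LinearMap.range (E₂ : H →ₗ[ℂ] H)) :
    ‖P₁ - P₂‖ ≤ ‖E₁ - E₂‖ := by
  have hE₁P₁ := IsIdempotentElem.mul_eq_right_of_range_le hE₁ hr₁.le
  have hP₁E₁ := IsIdempotentElem.mul_eq_right_of_range_le hP₁ hr₁.ge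
  have hE₂P₂ := IsIdempotentElem.mul_eq_right_of_range_le hE₂ hr₂.le
  have hP₂E₂ := IsIdempotentElem.mul_eq_right_of_range_le hP₂ hr₂.ge
  rw [sub_eq_mul_star_sub_mul_one_sub_add hP₁sa hP₂sa hE₁P₁ hP₁E₁ hE₂P₂ hP₂E₂]
  simpa only [norm_star, max_self] using IsStarProjection.norm_mul_mul_one_sub_add_le
    ⟨hP₁, hP₁sa⟩ ⟨hP₂, hP₂sa⟩ (star (E₁ - E₂)) (E₁ - E₂)
end

section
/- Let S be a pseudo-regular subspace of a Krein space (H,J), with isotropic part S°. If M₁ and M₂ are regular subspaces such that S = M₁ [∔] S° = M₂ [∔] S°, then the restriction to M₁ of the projection P_{M₂ // S°} (the projection in L(S) with range M₂ and nullspace S°) is a bounded J-isometric isomorphism from M₁ onto M₂, i.e., it is bijective and satisfies [Wf, Wg] = [f, g] for all f, g ∈ M₁. -/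
open ContinuousLinearMap

variable {H : Type*} [NormedAddCommGroup H] [InnerProductSpace ℂ H] [CompleteSpace H]

/-- A (closed) subspace `M` is regular if `M [∔] M^{[⊥]} = H`. -/
def KreinRegular (J : H →L[ℂ] H) (M : Submodule ℂ H) : Prop :=
  IsClosed (M : Set H) ∧ M ⊔ jperp J M = ⊤ ∧ M ⊓ jperp J M = ⊥

/-- A closed subspace `S` is pseudo-regular if `S = M [∔] S°` for some regular subspace `M`,
where `S° = S ⊓ S^{[⊥]}` is the isotropic part. -/
def KreinPseudoRegular (J : H →L[ℂ] H) (S : Submodule ℂ H) : Prop :=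
  IsClosed (S : Set H) ∧ ∃ M : Submodule ℂ H, KreinRegular J M ∧
    M ⊔ (S ⊓ jperp J S) = S ∧ M ⊓ (S ⊓ jperp J S) = ⊥

/-! The projection `E` splits every `f ∈ M₂ ⊔ S°` as `E f + (f - E f)` with `E f ∈ M₂` and
`f - E f ∈ S°`. Hence `E` maps a second complement `M₁` of `S°` bijectively onto `M₂`, and since
`S°` is `J`-orthogonal to all of `S`, adding elements of `S°` does not change `[·,·]` on `S`. -/

section Projection

variable {R V F : Type*} [Ring R] [AddCommGroup V] [Module R V] [FunLike F V V]
  [LinearMapClass F R V V] {M₁ M₂ N : Submodule R V} {E : F}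

lemma apply_mem_and_sub_apply_mem_of_mem_sup (hfix : ∀ x ∈ M₂, E x = x)
    (hker : ∀ x ∈ N, E x = 0) {f : V} (hf : f ∈ M₂ ⊔ N) : E f ∈ M₂ ∧ f - E f ∈ N := by
  obtain ⟨m, hm, n, hn, rfl⟩ := Submodule.mem_sup.mp hf
  rw [map_add, hfix m hm, hker n hn, add_zero, add_sub_cancel_left]
  exact ⟨hm, hn⟩

lemma bijOn_of_sup_eq_sup (hsup : M₁ ⊔ N = M₂ ⊔ N) (hinf : M₁ ⊓ N = ⊥)
    (hfix : ∀ x ∈ M₂, E x = x) (hker : ∀ x ∈ N, E x = 0) :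
    Set.BijOn E (M₁ : Set V) (M₂ : Set V) := by
  have hdec {f : V} (hf : f ∈ M₁) : E f ∈ M₂ ∧ f - E f ∈ N :=
    apply_mem_and_sub_apply_mem_of_mem_sup hfix hker (hsup ▸ Submodule.mem_sup_left hf)
  refine ⟨fun f hf => (hdec hf).1, fun f hf g hg hfg => ?_, fun m hm => ?_⟩
  · have hN := (hdec (M₁.sub_mem hf hg)).2
    rw [map_sub, hfg, sub_self, sub_zero] at hN
    have : f - g ∈ M₁ ⊓ N := ⟨M₁.sub_mem hf hg, hN⟩
    rwa [hinf, Submodule.mem_bot, sub_eq_zero] at this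
  · obtain ⟨f, hf, n, hn, hfn⟩ := Submodule.mem_sup.mp (hsup ▸ Submodule.mem_sup_left hm)
    refine ⟨f, hf, ?_⟩
    rw [eq_sub_of_add_eq hfn, map_sub, hfix m hm, hker n hn, sub_zero]

end Projection

section Isotropic

variable {J : H →L[ℂ] H} {S : Submodule ℂ H}

lemma inner_apply_eq_zero_of_mem_jperp (hJsa : ContinuousLinearMap.adjoint J = J) {x g : H}
    (hx : x ∈ jperp J S) (hg : g ∈ S) : (inner ℂ (J x) g : ℂ) = 0 := by
  rw [← hJsa, ContinuousLinearMap.adjoint_inner_left, ← inner_conj_symm, hx g hg, map_zero]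

lemma inner_apply_add_isotropic (hJsa : ContinuousLinearMap.adjoint J = J) {x y n₁ n₂ : H}
    (hx : x ∈ S) (hy : y ∈ S) (hn₁ : n₁ ∈ S ⊓ jperp J S) (hn₂ : n₂ ∈ jperp J S) :
    (inner ℂ (J (x + n₁)) (y + n₂) : ℂ) = inner ℂ (J x) y := by
  rw [map_add, inner_add_left, inner_add_right, inner_add_right, hn₂ x hx, hn₂ n₁ hn₁.1,
    inner_apply_eq_zero_of_mem_jperp hJsa hn₁.2 hy]
  simp

end Isotropic

theorem stmt10_general (J : H →L[ℂ] H)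
    (hJsa : ContinuousLinearMap.adjoint J = J)
    (S M₁ M₂ : Submodule ℂ H)
    (h₁sup : M₁ ⊔ (S ⊓ jperp J S) = S) (h₁inf : M₁ ⊓ (S ⊓ jperp J S) = ⊥)
    (h₂sup : M₂ ⊔ (S ⊓ jperp J S) = S)
    (E : H →L[ℂ] H)
    (hEfix : ∀ x ∈ M₂, E x = x) (hEker : ∀ x ∈ S ⊓ jperp J S, E x = 0) :
    Set.BijOn (fun x => E x) (M₁ : Set H) (M₂ : Set H) ∧
    ∀ f ∈ M₁, ∀ g ∈ M₁, (inner ℂ (J (E f)) (E g) : ℂ) = inner ℂ (J f) g := by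
  refine ⟨bijOn_of_sup_eq_sup (h₁sup.trans h₂sup.symm) h₁inf hEfix hEker, fun f hf g hg => ?_⟩
  have hM₁ : M₁ ≤ M₂ ⊔ (S ⊓ jperp J S) := h₂sup.symm ▸ h₁sup ▸ le_sup_left
  have hM₂ : M₂ ≤ S := h₂sup ▸ le_sup_left
  obtain ⟨hEf, hnf⟩ := apply_mem_and_sub_apply_mem_of_mem_sup hEfix hEker (hM₁ hf)
  obtain ⟨hEg, hng⟩ := apply_mem_and_sub_apply_mem_of_mem_sup hEfix hEker (hM₁ hg)
  calc (inner ℂ (J (E f)) (E g) : ℂ)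
      = inner ℂ (J (E f + (f - E f))) (E g + (g - E g)) :=
        (inner_apply_add_isotropic hJsa (hM₂ hEf) (hM₂ hEg) hnf hng.2).symm
    _ = inner ℂ (J f) g := by rw [add_sub_cancel, add_sub_cancel]

/-- If `S = M₁ [∔] S° = M₂ [∔] S°` with `M₁, M₂` regular, then the projection with range `M₂`
and nullspace `S°` restricts to a `J`-isometric isomorphism from `M₁` onto `M₂`. -/
theorem stmt10 (J : H →L[ℂ] H)
    (hJsa : ContinuousLinearMap.adjoint J = J) (hJ2 : J ∘L J = 1)
    (S M₁ M₂ : Submodule ℂ H) (hSc : IsClosed (S : Set H))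
    (hM₁ : KreinRegular J M₁) (hM₂ : KreinRegular J M₂)
    (h₁sup : M₁ ⊔ (S ⊓ jperp J S) = S) (h₁inf : M₁ ⊓ (S ⊓ jperp J S) = ⊥)
    (h₂sup : M₂ ⊔ (S ⊓ jperp J S) = S) (h₂inf : M₂ ⊓ (S ⊓ jperp J S) = ⊥)
    (E : H →L[ℂ] H)
    (hEfix : ∀ x ∈ M₂, E x = x) (hEker : ∀ x ∈ S ⊓ jperp J S, E x = 0) :
    Set.BijOn (fun x => E x) (M₁ : Set H) (M₂ : Set H) ∧
    ∀ f ∈ M₁, ∀ g ∈ M₁, (inner ℂ (J (E f)) (E g) : ℂ) = inner ℂ (J f) g :=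
  stmt10_general J hJsa S M₁ M₂ h₁sup h₁inf h₂sup E hEfix hEker
end

section
/- Let (H,J) be a Krein space and let S = Gr(K) be a maximal uniformly J-positive subspace with angular operator K: H₊ → H₋, ‖K‖ < 1. Then for any unitary operators V₊ on H₊ and V₋ on H₋, the block operator matrix U = [[(I₊ − K*K)^{-1/2}V₊, K*(I₋ − KK*)^{-1/2}V₋], [K(I₊ − K*K)^{-1/2}V₊, (I₋ − KK*)^{-1/2}V₋]] with respect to H = H₊ ⊕ H₋ is J-unitary and maps H₊ onto S. -/
/-!
Write `x ∈ H` as `f + g` with `f ∈ H₊`, `g ∈ H₋`; then `[x, y] = ⟪f, f'⟫ - ⟪g, g'⟫`.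
`U` sends `f + g` to `(a + K* b) + (K a + b)` with `a = A₊ V₊ f`, `b = A₋ V₋ g`, and the `J`-form of
such vectors is `⟪a, (I - K* K) a'⟫ - ⟪b, (I - K K*) b'⟫`. Since `A₊ (I - K* K) A₊ = I` and `V₊` is
isometric (likewise on `H₋`), `U` preserves the `J`-form, i.e. `U* J U = J`, so `J U* J` is a left
inverse of `U`. It is also a right inverse because `U` is onto: `a + K* b = p`, `K a + b = m` is
solved by `a = (I - K* K)⁻¹ (p - K* m)`, `b = m - K a`, and `A₊ V₊`, `A₋ V₋` are onto. The latter
also gives `U H₊ = {a + K a}`.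
-/

open ContinuousLinearMap

variable {H : Type*} [NormedAddCommGroup H] [InnerProductSpace ℂ H] [CompleteSpace H]

theorem mul_mul_eq_one_of_mul_self_inverse {M : Type*} [Monoid M] {a t : M}
    (h₁ : a * a * t = 1) (h₂ : t * (a * a) = 1) : a * t * a = 1 := by
  have hcomm : t * a = a * t := left_inv_eq_right_inv (by rwa [mul_assoc]) (by rwa [← mul_assoc])
  rw [mul_assoc, hcomm, ← mul_assoc, h₁]

theorem ContinuousLinearMap.surjective_of_comp_eq_one {R M : Type*} [Semiring R]
    [TopologicalSpace M] [AddCommMonoid M] [Module R M] {A B : M →L[R] M} (h : A ∘L B = 1) :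
    Function.Surjective A :=
  fun x ↦ ⟨B x, congr($h x)⟩

theorem Submodule.map_eq_range_add_comp_of_surjective {R M : Type*} [Semiring R]
    [TopologicalSpace M] [AddCommMonoid M] [ContinuousAdd M] [Module R M]
    {Hp Hm : Submodule R M} {U : M →L[R] M} {K : Hp →L[R] Hm} {B : Hp →L[R] Hp}
    (hB : Function.Surjective B) (hU : ∀ f : Hp, U f = B f + K (B f)) :
    Hp.map (U : M →ₗ[R] M) =
      LinearMap.range ((Hp.subtypeL + Hm.subtypeL ∘L K : Hp →L[R] M) : Hp →ₗ[R] M) := by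
  have hUB : (U : M →ₗ[R] M) ∘ₗ Hp.subtype =
      ((Hp.subtypeL + Hm.subtypeL ∘L K : Hp →L[R] M) : Hp →ₗ[R] M) ∘ₗ (B : Hp →ₗ[R] Hp) := by
    ext f
    simp [hU]
  calc Hp.map (U : M →ₗ[R] M) = LinearMap.range ((U : M →ₗ[R] M) ∘ₗ Hp.subtype) := by
        rw [LinearMap.range_comp, Hp.range_subtype]
    _ = _ := by rw [hUB, LinearMap.range_comp_of_range_eq_top _ (LinearMap.range_eq_top.mpr hB)]

section
variable {𝕜 E F : Type*} [RCLike 𝕜]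
  [NormedAddCommGroup E] [InnerProductSpace 𝕜 E] [CompleteSpace E]
  [NormedAddCommGroup F] [InnerProductSpace 𝕜 F] [CompleteSpace F]

theorem inner_add_adjoint_sub_inner_apply_add (K : E →L[𝕜] F) (a a' : E) (b b' : F) :
    inner 𝕜 (a + adjoint K b) (a' + adjoint K b') - inner 𝕜 (K a + b) (K a' + b') =
      inner 𝕜 a ((1 - adjoint K ∘L K) a') - inner 𝕜 b ((1 - K ∘L adjoint K) b') := by
  simp only [inner_add_left, inner_add_right, sub_apply, one_apply_eq_self, comp_apply,
    inner_sub_right]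
  rw [adjoint_inner_right, adjoint_inner_left, adjoint_inner_left, adjoint_inner_right]
  ring

theorem exists_add_adjoint_eq_and_apply_add_eq (K : E →L[𝕜] F) {R : E →L[𝕜] E}
    (hR : (1 - adjoint K ∘L K) ∘L R = 1) (p : E) (m : F) :
    ∃ a b, a + adjoint K b = p ∧ K a + b = m := by
  set a := R (p - adjoint K m)
  have ha : a - adjoint K (K a) = p - adjoint K m := by
    simpa only [comp_apply, sub_apply, one_apply_eq_self] using congr($hR (p - adjoint K m))
  refine ⟨a, m - K a, ?_, by abel⟩
  rw [map_sub]
  linear_combination (norm := module) ha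

theorem inner_apply_apply_apply_eq_of_comp_comp_eq_one {A T : E →L[𝕜] E} (hA : IsSelfAdjoint A)
    (hAT : A ∘L T ∘L A = 1) (u v : E) : inner 𝕜 (A u) (T (A v)) = inner 𝕜 u v := by
  rw [← adjoint_inner_right, hA.adjoint_eq, ← comp_apply T A, ← comp_apply A, hAT,
    one_apply_eq_self]

theorem inner_apply_apply_apply_eq_of_sq_inverse {A T : E →L[𝕜] E} (hA : IsSelfAdjoint A)
    (h₁ : (A ∘L A) ∘L T = 1) (h₂ : T ∘L (A ∘L A) = 1) {V : E →L[𝕜] E} (hV : adjoint V ∘L V = 1)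
    (u v : E) : inner 𝕜 (A (V u)) (T (A (V v))) = inner 𝕜 u v := by
  rw [inner_apply_apply_apply_eq_of_comp_comp_eq_one hA (mul_mul_eq_one_of_mul_self_inverse h₁ h₂),
    (inner_map_map_iff_adjoint_comp_self V).mpr hV]

theorem adjoint_comp_comp_eq_of_inner_apply_apply {J U : E →L[𝕜] E}
    (h : ∀ x y, inner 𝕜 (J (U x)) (U y) = inner 𝕜 (J x) y) : adjoint U ∘L J ∘L U = J := by
  ext x
  refine ext_inner_right 𝕜 fun y ↦ ?_
  simpa [adjoint_inner_left] using h x y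

theorem exists_inverse_of_adjoint_comp_comp_eq {J U : E →L[𝕜] E} (hJ2 : J ∘L J = 1)
    (hU : adjoint U ∘L J ∘L U = J) (hsurj : Function.Surjective U) :
    ∃ W : E →L[𝕜] E, U ∘L W = 1 ∧ W ∘L U = 1 := by
  have hWU : (J ∘L adjoint U ∘L J) ∘L U = 1 := by
    change J ∘L (adjoint U ∘L J ∘L U) = 1
    rw [hU, hJ2]
  refine ⟨_, ?_, hWU⟩
  ext x
  obtain ⟨y, rfl⟩ := hsurj x
  change U ((J ∘L adjoint U ∘L J) (U y)) = U y
  rw [← comp_apply (J ∘L adjoint U ∘L J) U, hWU, one_apply_eq_self]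

end

section Symmetry
variable {𝕜 E : Type*} [RCLike 𝕜] [NormedAddCommGroup E] [InnerProductSpace 𝕜 E]

theorem apply_eq_self_of_mem_ker_sub_one {J : E →L[𝕜] E} {x : E}
    (hx : x ∈ LinearMap.ker ((J - 1 : E →L[𝕜] E) : E →ₗ[𝕜] E)) : J x = x := by
  simpa [sub_eq_zero] using hx

theorem apply_eq_neg_of_mem_ker_add_one {J : E →L[𝕜] E} {x : E}
    (hx : x ∈ LinearMap.ker ((J + 1 : E →L[𝕜] E) : E →ₗ[𝕜] E)) : J x = -x := by
  simpa [eq_neg_iff_add_eq_zero] using hx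

theorem exists_add_eq_of_comp_self_eq_one {J : E →L[𝕜] E} (hJ2 : J ∘L J = 1)
    {Hp Hm : Submodule 𝕜 E} (hHp : Hp = LinearMap.ker ((J - 1 : E →L[𝕜] E) : E →ₗ[𝕜] E))
    (hHm : Hm = LinearMap.ker ((J + 1 : E →L[𝕜] E) : E →ₗ[𝕜] E)) (x : E) :
    ∃ (f : Hp) (g : Hm), (f : E) + g = x := by
  have hJJ : J (J x) = x := by simpa using congr($hJ2 x)
  subst hHp hHm
  refine ⟨⟨(2⁻¹ : 𝕜) • (x + J x), ?_⟩, ⟨(2⁻¹ : 𝕜) • (x - J x), ?_⟩, ?_⟩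
  · simp [hJJ, add_comm]
  · simp [hJJ]
  · simp only
    rw [← smul_add, add_add_sub_cancel, ← two_smul 𝕜, smul_smul, inv_mul_cancel₀ two_ne_zero,
      one_smul]

variable [CompleteSpace E]

theorem inner_eq_zero_of_apply_eq_self_of_apply_eq_neg {J : E →L[𝕜] E} (hJ : IsSelfAdjoint J)
    {f g : E} (hf : J f = f) (hg : J g = -g) : inner 𝕜 f g = 0 := by
  have h : inner 𝕜 f g = -inner 𝕜 f g := by
    rw [← inner_neg_right, ← hg, ← hJ.adjoint_eq, adjoint_inner_right, hf]
  exact CharZero.eq_neg_self_iff.mp h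

theorem inner_apply_add_add_eq_sub {J : E →L[𝕜] E} (hJ : IsSelfAdjoint J) {f f' g g' : E}
    (hf : J f = f) (hf' : J f' = f') (hg : J g = -g) (hg' : J g' = -g') :
    inner 𝕜 (J (f + g)) (f' + g') = inner 𝕜 f f' - inner 𝕜 g g' := by
  rw [map_add, hf, hg, inner_add_left, inner_add_right, inner_add_right, inner_neg_left,
    inner_neg_left, inner_eq_zero_of_apply_eq_self_of_apply_eq_neg hJ hf hg',
    inner_eq_zero_symm.mp (inner_eq_zero_of_apply_eq_self_of_apply_eq_neg hJ hf' hg)]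
  ring

end Symmetry

theorem stmt16_general (J : H →L[ℂ] H)
    (hJsa : ContinuousLinearMap.adjoint J = J) (hJ2 : J ∘L J = 1)
    (Hp Hm : Submodule ℂ H) [CompleteSpace Hp] [CompleteSpace Hm]
    (hHp : Hp = LinearMap.ker ((J - 1 : H →L[ℂ] H) : H →ₗ[ℂ] H)) (hHm : Hm = LinearMap.ker ((J + 1 : H →L[ℂ] H) : H →ₗ[ℂ] H))
    (K : Hp →L[ℂ] Hm)
    -- `Ap = (I₊ − K*K)^{-1/2}` : the positive square root of the inverse of `I₊ − K*K`
    (Ap : Hp →L[ℂ] Hp) (hApPos : Ap.IsPositive)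
    (hAp : (Ap ∘L Ap) ∘L (1 - ContinuousLinearMap.adjoint K ∘L K) = 1)
    (hAp' : (1 - ContinuousLinearMap.adjoint K ∘L K) ∘L (Ap ∘L Ap) = 1)
    -- `Am = (I₋ − KK*)^{-1/2}` : the positive square root of the inverse of `I₋ − KK*`
    (Am : Hm →L[ℂ] Hm) (hAmPos : Am.IsPositive)
    (hAm : (Am ∘L Am) ∘L (1 - K ∘L ContinuousLinearMap.adjoint K) = 1)
    (hAm' : (1 - K ∘L ContinuousLinearMap.adjoint K) ∘L (Am ∘L Am) = 1)
    -- unitaries on `H₊` and `H₋`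
    (Vp : Hp →L[ℂ] Hp) (hVp : Vp ∘L ContinuousLinearMap.adjoint Vp = 1)
    (hVp' : ContinuousLinearMap.adjoint Vp ∘L Vp = 1)
    (Vm : Hm →L[ℂ] Hm) (hVm : Vm ∘L ContinuousLinearMap.adjoint Vm = 1)
    (hVm' : ContinuousLinearMap.adjoint Vm ∘L Vm = 1)
    -- `U` is the block operator matrix above, w.r.t. `H = H₊ ⊕ H₋`
    (U : H →L[ℂ] H)
    (hUp : ∀ f : Hp, U (f : H) = (Ap (Vp f) : H) + (K (Ap (Vp f)) : H))
    (hUm : ∀ g : Hm,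
      U (g : H) = ((ContinuousLinearMap.adjoint K) (Am (Vm g)) : H) + (Am (Vm g) : H)) :
    (ContinuousLinearMap.adjoint U) ∘L J ∘L U = J ∧
    (∃ W : H →L[ℂ] H, U ∘L W = 1 ∧ W ∘L U = 1) ∧
    Submodule.map (U : H →ₗ[ℂ] H) Hp = LinearMap.range ((Hp.subtypeL + Hm.subtypeL ∘L K : Hp →L[ℂ] H) : Hp →ₗ[ℂ] H) := by
  have hJ : IsSelfAdjoint J := isSelfAdjoint_iff'.mpr hJsa
  have hJp (f : Hp) : J f = f := apply_eq_self_of_mem_ker_sub_one (hHp ▸ f.2)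
  have hJm (g : Hm) : J g = -g := apply_eq_neg_of_mem_ker_add_one (hHm ▸ g.2)
  have hdec := exists_add_eq_of_comp_self_eq_one hJ2 hHp hHm
  have hU (f : Hp) (g : Hm) : U (f + g) =
      ((Ap (Vp f) + adjoint K (Am (Vm g)) : Hp) : H) + ((K (Ap (Vp f)) + Am (Vm g) : Hm) : H) := by
    rw [map_add, hUp, hUm]; push_cast; abel
  have hJU : adjoint U ∘L J ∘L U = J := by
    refine adjoint_comp_comp_eq_of_inner_apply_apply fun x y ↦ ?_
    obtain ⟨f, g, rfl⟩ := hdec x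
    obtain ⟨f', g', rfl⟩ := hdec y
    simp only [hU, inner_apply_add_add_eq_sub hJ (hJp _) (hJp _) (hJm _) (hJm _),
      ← Submodule.coe_inner, inner_add_adjoint_sub_inner_apply_add,
      inner_apply_apply_apply_eq_of_sq_inverse hApPos.isSelfAdjoint hAp hAp' hVp',
      inner_apply_apply_apply_eq_of_sq_inverse hAmPos.isSelfAdjoint hAm hAm' hVm']
  have hsurjP : Function.Surjective (Ap ∘L Vp) :=
    (surjective_of_comp_eq_one (B := Ap ∘L (1 - adjoint K ∘L K)) hAp).comp
      (surjective_of_comp_eq_one hVp)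
  have hsurjM : Function.Surjective (Am ∘L Vm) :=
    (surjective_of_comp_eq_one (B := Am ∘L (1 - K ∘L adjoint K)) hAm).comp
      (surjective_of_comp_eq_one hVm)
  have hsurj : Function.Surjective U := by
    intro x
    obtain ⟨p, m, rfl⟩ := hdec x
    obtain ⟨a, b, rfl, rfl⟩ := exists_add_adjoint_eq_and_apply_add_eq K hAp' p m
    obtain ⟨f, rfl⟩ := hsurjP a
    obtain ⟨g, rfl⟩ := hsurjM b
    exact ⟨f + g, hU f g⟩
  exact ⟨hJU, exists_inverse_of_adjoint_comp_comp_eq hJ2 hJU hsurj,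
    Submodule.map_eq_range_add_comp_of_surjective hsurjP hUp⟩

/-- Let `S = Gr(K)` be a maximal uniformly `J`-positive subspace with angular operator
`K : H₊ → H₋`, `‖K‖ < 1`. For any unitaries `V₊`, `V₋` of `H₊`, `H₋`, the block operator
`U = [[(I−K*K)^{-1/2}V₊, K*(I−KK*)^{-1/2}V₋], [K(I−K*K)^{-1/2}V₊, (I−KK*)^{-1/2}V₋]]` is
`J`-unitary and maps `H₊` onto `S`. -/
theorem stmt16 (J : H →L[ℂ] H)
    (hJsa : ContinuousLinearMap.adjoint J = J) (hJ2 : J ∘L J = 1)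
    (Hp Hm : Submodule ℂ H) [CompleteSpace Hp] [CompleteSpace Hm]
    (hHp : Hp = LinearMap.ker ((J - 1 : H →L[ℂ] H) : H →ₗ[ℂ] H)) (hHm : Hm = LinearMap.ker ((J + 1 : H →L[ℂ] H) : H →ₗ[ℂ] H))
    (K : Hp →L[ℂ] Hm) (hK : ‖K‖ < 1)
    -- `Ap = (I₊ − K*K)^{-1/2}` : the positive square root of the inverse of `I₊ − K*K`
    (Ap : Hp →L[ℂ] Hp) (hApPos : Ap.IsPositive)
    (hAp : (Ap ∘L Ap) ∘L (1 - ContinuousLinearMap.adjoint K ∘L K) = 1)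
    (hAp' : (1 - ContinuousLinearMap.adjoint K ∘L K) ∘L (Ap ∘L Ap) = 1)
    -- `Am = (I₋ − KK*)^{-1/2}` : the positive square root of the inverse of `I₋ − KK*`
    (Am : Hm →L[ℂ] Hm) (hAmPos : Am.IsPositive)
    (hAm : (Am ∘L Am) ∘L (1 - K ∘L ContinuousLinearMap.adjoint K) = 1)
    (hAm' : (1 - K ∘L ContinuousLinearMap.adjoint K) ∘L (Am ∘L Am) = 1)
    -- unitaries on `H₊` and `H₋`
    (Vp : Hp →L[ℂ] Hp) (hVp : Vp ∘L ContinuousLinearMap.adjoint Vp = 1)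
    (hVp' : ContinuousLinearMap.adjoint Vp ∘L Vp = 1)
    (Vm : Hm →L[ℂ] Hm) (hVm : Vm ∘L ContinuousLinearMap.adjoint Vm = 1)
    (hVm' : ContinuousLinearMap.adjoint Vm ∘L Vm = 1)
    -- `U` is the block operator matrix above, w.r.t. `H = H₊ ⊕ H₋`
    (U : H →L[ℂ] H)
    (hUp : ∀ f : Hp, U (f : H) = (Ap (Vp f) : H) + (K (Ap (Vp f)) : H))
    (hUm : ∀ g : Hm,
      U (g : H) = ((ContinuousLinearMap.adjoint K) (Am (Vm g)) : H) + (Am (Vm g) : H)) :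
    (ContinuousLinearMap.adjoint U) ∘L J ∘L U = J ∧
    (∃ W : H →L[ℂ] H, U ∘L W = 1 ∧ W ∘L U = 1) ∧
    Submodule.map (U : H →ₗ[ℂ] H) Hp = LinearMap.range ((Hp.subtypeL + Hm.subtypeL ∘L K : Hp →L[ℂ] H) : Hp →ₗ[ℂ] H) :=
  stmt16_general J hJsa hJ2 Hp Hm hHp hHm K Ap hApPos hAp hAp' Am hAmPos hAm hAm' Vp hVp hVp' Vm hVm
    hVm' U hUp hUm
end
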